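/- For any t-norm T and any fuzzy measure m, the C_T-integral C_m^T(x) = Σ_{i=1}^n T(x_{(i)} - x_{(i-1)}, m(A_{(i)})) is a (1,...,1)-pre-aggregation function which is idempotent and averaging. -/
import Mathlib


open Finset

/-- The previous element `x_{(i-1)}` in the increasing rearrangement, with `x_{(0)} = 0`. -/
noncomputable def prevT {n : ℕ} (x : Fin n → ℝ) (σ : Equiv.Perm (Fin n)) (i : Fin n) : ℝ :=
  if _ : i.val = 0 then 0
  else x (σ ⟨i.val - 1, Nat.lt_of_le_of_lt (Nat.sub_le _ _) i.isLt⟩)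

/-- Discrete Choquet integral w.r.t. a set function `m`, given a permutation `σ`
that rearranges `x` increasingly. `A_{(i)} = {σ(i), ..., σ(n)}`. -/
noncomputable def choquet {n : ℕ} (m : Finset (Fin n) → ℝ) (x : Fin n → ℝ)
    (σ : Equiv.Perm (Fin n)) : ℝ :=
  ∑ i : Fin n, (x (σ i) - prevT x σ i) * m (Finset.image σ (Finset.Ici i))

/-- Choquet-like integral where the product is replaced by a bivariate function F. -/
noncomputable def choquetF {n : ℕ} (F : ℝ → ℝ → ℝ) (m : Finset (Fin n) → ℝ)
    (x : Fin n → ℝ) (σ : Equiv.Perm (Fin n)) : ℝ :=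
  ∑ i : Fin n, F (x (σ i) - prevT x σ i) (m (Finset.image σ (Finset.Ici i)))


section CTHelpers

lemma prevT_zero' {k : ℕ} (x : Fin (k+1) → ℝ) (σ : Equiv.Perm (Fin (k+1))) :
    prevT x σ 0 = 0 := by simp [prevT]

lemma prevT_succ' {k : ℕ} (x : Fin (k+1) → ℝ) (σ : Equiv.Perm (Fin (k+1))) (j : Fin k) :
    prevT x σ j.succ = x (σ j.castSucc) := by
  have h : (j.succ : Fin (k+1)).val ≠ 0 := by simp [Fin.val_succ]
  rw [prevT, dif_neg h]
  congr 2

lemma image_Ici_zero' {k : ℕ} (σ : Equiv.Perm (Fin (k+1))) :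
    Finset.image σ (Finset.Ici (0 : Fin (k+1))) = Finset.univ := by
  have h : (Finset.Ici (0 : Fin (k+1))) = Finset.univ := by
    ext a; simp [Fin.zero_le]
  rw [h]; exact Finset.image_univ_equiv σ

lemma choquetF_succ' {k : ℕ} (F : ℝ → ℝ → ℝ) (m : Finset (Fin (k+1)) → ℝ)
    (x : Fin (k+1) → ℝ) (σ : Equiv.Perm (Fin (k+1))) :
    choquetF F m x σ = F (x (σ 0)) (m Finset.univ)
      + ∑ j : Fin k, F (x (σ j.succ) - x (σ j.castSucc))
          (m (Finset.image σ (Finset.Ici j.succ))) := by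
  rw [choquetF, Fin.sum_univ_succ, prevT_zero', image_Ici_zero', sub_zero]
  simp only [prevT_succ']

lemma telescope' {k : ℕ} (y : Fin (k+1) → ℝ) :
    ∑ j : Fin k, (y j.succ - y j.castSucc) = y (Fin.last k) - y 0 := by
  induction k with
  | zero => simp
  | succ k ih =>
    rw [Fin.sum_univ_castSucc]
    have h := ih (y ∘ Fin.castSucc)
    simp only [Function.comp_apply] at h
    have e1 : ∀ j : Fin k, (Fin.castSucc j).succ = Fin.castSucc j.succ := by
      intro j; ext; simp
    calc ∑ j : Fin k, (y (Fin.castSucc j).succ - y (Fin.castSucc j).castSucc)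
          + (y (Fin.last k).succ - y (Fin.last k).castSucc)
        = ∑ j : Fin k, (y (Fin.castSucc j.succ) - y (Fin.castSucc j.castSucc))
          + (y (Fin.last (k+1)) - y (Fin.castSucc (Fin.last k))) := by
          congr 1
      _ = y (Fin.last (k+1)) - y 0 := by
          rw [h]
          have e0 : y (Fin.castSucc 0) = y 0 := by congr 1
          rw [e0]; ring

lemma image_Ici_succ' {k : ℕ} (x : Fin (k+1) → ℝ) (σ : Equiv.Perm (Fin (k+1)))
    (h : Monotone (x ∘ σ)) (j : Fin k)
    (hd : x (σ j.castSucc) < x (σ j.succ)) :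
    Finset.image σ (Finset.Ici j.succ)
      = Finset.univ.filter (fun a => x (σ j.succ) ≤ x a) := by
  ext a
  simp only [Finset.mem_image, Finset.mem_Ici, Finset.mem_filter, Finset.mem_univ, true_and]
  constructor
  · rintro ⟨b, hb, rfl⟩; exact h hb
  · intro ha
    refine ⟨σ.symm a, ?_, by simp⟩
    by_contra hlt
    push_neg at hlt
    have hle : σ.symm a ≤ j.castSucc := by
      rw [Fin.le_def]; rw [Fin.lt_def] at hlt
      simp only [Fin.val_succ, Fin.coe_castSucc] at hlt ⊢; omega
    have h2 := h hle
    simp only [Function.comp_apply, Equiv.apply_symm_apply] at h2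
    linarith

lemma choquetF_mono_congr' {k : ℕ} (T : ℝ → ℝ → ℝ) (m : Finset (Fin (k+1)) → ℝ)
    (hT0 : ∀ y ∈ Set.Icc (0:ℝ) 1, T 0 y = 0)
    (hm_range : ∀ X, m X ∈ Set.Icc (0:ℝ) 1)
    (x : Fin (k+1) → ℝ) (σ₁ σ₂ : Equiv.Perm (Fin (k+1)))
    (h₁ : Monotone (x ∘ σ₁)) (h₂ : Monotone (x ∘ σ₂)) :
    choquetF T m x σ₁ = choquetF T m x σ₂ := by
  have hxx : x ∘ σ₁ = x ∘ σ₂ :=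
    (Tuple.comp_sort_eq_comp_iff_monotone.mpr h₁).trans
      (Tuple.comp_sort_eq_comp_iff_monotone.mpr h₂).symm
  have hval : ∀ i, x (σ₁ i) = x (σ₂ i) := fun i => congrFun hxx i
  rw [choquetF_succ', choquetF_succ', hval 0]
  congr 1
  refine Finset.sum_congr rfl fun j _ => ?_
  by_cases heq : x (σ₁ j.castSucc) = x (σ₁ j.succ)
  · have heq₂ : x (σ₂ j.succ) - x (σ₂ j.castSucc) = 0 := by
      rw [← hval j.succ, ← hval j.castSucc, heq]; ring
    rw [heq, sub_self, heq₂, hT0 _ (hm_range _), hT0 _ (hm_range _)]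
  · have hlt : x (σ₁ j.castSucc) < x (σ₁ j.succ) :=
      lt_of_le_of_ne (h₁ (Fin.castSucc_le_succ j)) heq
    have hlt₂ : x (σ₂ j.castSucc) < x (σ₂ j.succ) := by
      rw [← hval j.castSucc, ← hval j.succ]; exact hlt
    rw [image_Ici_succ' x σ₁ h₁ j hlt, image_Ici_succ' x σ₂ h₂ j hlt₂,
      hval j.succ, hval j.castSucc]

end CTHelpers

/-- For any t-norm T and any fuzzy measure m, the C_T-integral is a
(1,...,1)-pre-aggregation function which is idempotent and averaging. -/
theorem CT_integral_preaggregation {n : ℕ} (hn : 1 ≤ n) (T : ℝ → ℝ → ℝ)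
    (hT_range : ∀ x y, x ∈ Set.Icc (0 : ℝ) 1 → y ∈ Set.Icc (0 : ℝ) 1 →
      T x y ∈ Set.Icc (0 : ℝ) 1)
    (hT_comm : ∀ x y, x ∈ Set.Icc (0 : ℝ) 1 → y ∈ Set.Icc (0 : ℝ) 1 → T x y = T y x)
    (hT_assoc : ∀ x y z, x ∈ Set.Icc (0 : ℝ) 1 → y ∈ Set.Icc (0 : ℝ) 1 →
      z ∈ Set.Icc (0 : ℝ) 1 → T x (T y z) = T (T x y) z)
    (hT_mono : ∀ x x' y y', x ∈ Set.Icc (0 : ℝ) 1 → x' ∈ Set.Icc (0 : ℝ) 1 →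
      y ∈ Set.Icc (0 : ℝ) 1 → y' ∈ Set.Icc (0 : ℝ) 1 → x ≤ x' → y ≤ y' →
      T x y ≤ T x' y')
    (hT_neutral : ∀ x, x ∈ Set.Icc (0 : ℝ) 1 → T x 1 = x)
    (m : Finset (Fin n) → ℝ) (hm_range : ∀ X, m X ∈ Set.Icc (0 : ℝ) 1)
    (hm_mono : ∀ X Y : Finset (Fin n), X ⊆ Y → m X ≤ m Y)
    (hm_empty : m ∅ = 0) (hm_univ : m Finset.univ = 1)
    (hne : (Finset.univ : Finset (Fin n)).Nonempty) :
    -- (1,...,1)-directional increasingness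
    (∀ (x : Fin n → ℝ) (c : ℝ), 0 < c → (∀ i, x i ∈ Set.Icc (0 : ℝ) 1) →
      (∀ i, x i + c ∈ Set.Icc (0 : ℝ) 1) →
      ∀ (σ₁ σ₂ : Equiv.Perm (Fin n)), Monotone (fun i => x (σ₁ i)) →
        Monotone (fun i => x (σ₂ i) + c) →
        choquetF T m x σ₁ ≤ choquetF T m (fun i => x i + c) σ₂) ∧
    -- boundary conditions
    (∀ σ : Equiv.Perm (Fin n), choquetF T m (fun _ => (0 : ℝ)) σ = 0) ∧
    (∀ σ : Equiv.Perm (Fin n), choquetF T m (fun _ => (1 : ℝ)) σ = 1) ∧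
    -- idempotency
    (∀ c : ℝ, c ∈ Set.Icc (0 : ℝ) 1 → ∀ σ : Equiv.Perm (Fin n),
      choquetF T m (fun _ => c) σ = c) ∧
    -- averaging behaviour
    (∀ (x : Fin n → ℝ), (∀ i, x i ∈ Set.Icc (0 : ℝ) 1) →
      ∀ σ : Equiv.Perm (Fin n), Monotone (fun i => x (σ i)) →
        Finset.univ.inf' hne x ≤ choquetF T m x σ ∧
          choquetF T m x σ ≤ Finset.univ.sup' hne x) := by
  obtain ⟨k, rfl⟩ : ∃ k, n = k + 1 := ⟨n - 1, (Nat.succ_pred_eq_of_pos hn).symm⟩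
  have h01 : (0:ℝ) ∈ Set.Icc (0:ℝ) 1 := ⟨le_rfl, zero_le_one⟩
  have h11 : (1:ℝ) ∈ Set.Icc (0:ℝ) 1 := ⟨zero_le_one, le_rfl⟩
  have hT0 : ∀ y ∈ Set.Icc (0:ℝ) 1, T 0 y = 0 := by
    intro y hy
    have h1 : T 0 y ≤ T 0 1 := hT_mono 0 0 y 1 h01 h01 hy h11 le_rfl hy.2
    have h2 := hT_neutral 0 h01
    have h3 := (hT_range 0 y h01 hy).1
    linarith
  have hconst : ∀ c ∈ Set.Icc (0:ℝ) 1, ∀ σ : Equiv.Perm (Fin (k+1)),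
      choquetF T m (fun _ => c) σ = c := by
    intro c hc σ
    rw [choquetF_succ']
    simp only [sub_self, hm_univ, hT_neutral c hc]
    rw [Finset.sum_eq_zero fun j _ => hT0 _ (hm_range _), add_zero]
  refine ⟨?_, ?_, ?_, ?_, ?_⟩
  · -- directional increasingness
    intro x c hc hx hxc σ₁ σ₂ hmono1 hmono2
    have hmono2' : Monotone (x ∘ σ₂) := by
      intro a b hab
      have := hmono2 hab
      simpa using this
    rw [choquetF_mono_congr' T m hT0 hm_range x σ₁ σ₂ hmono1 hmono2']
    rw [choquetF_succ', choquetF_succ']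
    simp only [add_sub_add_right_eq_sub]
    have hfirst : T (x (σ₂ 0)) (m Finset.univ) ≤ T (x (σ₂ 0) + c) (m Finset.univ) :=
      hT_mono _ _ _ _ (hx _) (hxc _) (hm_range _) (hm_range _) (by linarith) le_rfl
    linarith
  · intro σ
    exact hconst 0 h01 σ
  · intro σ
    exact hconst 1 h11 σ
  · intro c hc σ
    exact hconst c hc σ
  · -- averaging
    intro x hx σ hmono
    have hdmem : ∀ j : Fin k, (x (σ j.succ) - x (σ j.castSucc)) ∈ Set.Icc (0:ℝ) 1 := by
      intro j
      have h1 : x (σ j.castSucc) ≤ x (σ j.succ) := hmono (Fin.castSucc_le_succ j)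
      have h2 := (hx (σ j.succ)).2
      have h3 := (hx (σ j.castSucc)).1
      constructor <;> [linarith; linarith]
    have hfirst : T (x (σ 0)) (m Finset.univ) = x (σ 0) := by
      rw [hm_univ]; exact hT_neutral _ (hx _)
    rw [choquetF_succ', hfirst]
    constructor
    · have h1 : Finset.univ.inf' hne x ≤ x (σ 0) := Finset.inf'_le x (Finset.mem_univ _)
      have h3 : (0:ℝ) ≤ ∑ j : Fin k, T (x (σ j.succ) - x (σ j.castSucc))
          (m (Finset.image σ (Finset.Ici j.succ))) :=
        Finset.sum_nonneg fun j _ => (hT_range _ _ (hdmem j) (hm_range _)).1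
      linarith
    · have hbound : ∀ j ∈ (Finset.univ : Finset (Fin k)), T (x (σ j.succ) - x (σ j.castSucc))
          (m (Finset.image σ (Finset.Ici j.succ))) ≤ x (σ j.succ) - x (σ j.castSucc) := by
        intro j _
        calc T (x (σ j.succ) - x (σ j.castSucc)) (m (Finset.image σ (Finset.Ici j.succ)))
            ≤ T (x (σ j.succ) - x (σ j.castSucc)) 1 :=
              hT_mono _ _ _ _ (hdmem j) (hdmem j) (hm_range _) h11 le_rfl (hm_range _).2
          _ = x (σ j.succ) - x (σ j.castSucc) := hT_neutral _ (hdmem j)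
      have hsum := Finset.sum_le_sum hbound
      have htel : ∑ j : Fin k, (x (σ j.succ) - x (σ j.castSucc))
          = x (σ (Fin.last k)) - x (σ 0) := by
        have := telescope' (x ∘ σ)
        simpa using this
      have hsup : x (σ (Fin.last k)) ≤ Finset.univ.sup' hne x :=
        Finset.le_sup' x (Finset.mem_univ _)
      rw [htel] at hsum
      linarith
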